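/- If w is a finite rich word, then its palindromic closure w^(+) = v·u·reverse(v), where w = vu with u the longest palindromic suffix of w, is also rich. -/

import Mathlib

/-- A word is a palindrome if it equals its reversal. -/
def Palindromic {α : Type*} (w : List α) : Prop := w.reverse = w

/-- A finite word is rich if it has exactly |w|+1 distinct palindromic factors
(including the empty word). -/
def Rich {α : Type*} (w : List α) : Prop :=
  {p : List α | p <:+: w ∧ Palindromic p}.ncard = w.length + 1

/-- A word is square-free if it has no factor of the form `u ++ u` with `u` nonempty. -/
def SqFree {α : Type*} (w : List α) : Prop :=
  ∀ u : List α, u ≠ [] → ¬ (u ++ u) <:+: w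

/-!
Appending a letter to a word creates at most one new palindromic factor, namely its longest
palindromic suffix: any shorter palindromic suffix is also a prefix of it, hence already occurs
earlier. So a word of length `n` has at most `n + 1` palindromic factors, and in a rich word the
longest palindromic suffix `u` of `w = v ++ u` occurs only once. In `v ++ u ++ v.reverse`, the
`|v|` palindromes `s ++ u ++ s.reverse`, for `s` a nonempty suffix of `v`, contain `u` followed
by a nonempty word, so none of them is a factor of `w`; together with the `|w| + 1` palindromic
factors of `w` this attains the bound `|w| + |v| + 1`.
-/

namespace PalindromicClosure

variable {α : Type*}

def palFactors (x : List α) : Set (List α) := {p : List α | p <:+: x ∧ Palindromic p}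

lemma rich_iff {w : List α} : Rich w ↔ (palFactors w).ncard = w.length + 1 := Iff.rfl

lemma palFactors_finite (x : List α) : (palFactors x).Finite :=
  (List.finite_toSet x.sublists).subset fun _ hp => by simpa using hp.1.sublist

lemma palFactors_mono {x y : List α} (h : x <:+: y) : palFactors x ⊆ palFactors y :=
  fun _ hp => ⟨hp.1.trans h, hp.2⟩

lemma palFactors_nil : palFactors ([] : List α) = {[]} := by
  ext p
  simp only [palFactors, Set.mem_ofPred_eq, Set.mem_singleton_iff, List.infix_nil]
  exact ⟨And.left, fun hp => ⟨hp, hp ▸ rfl⟩⟩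

lemma isSuffix_or_infix_dropLast_of_infix {p x : List α} (h : p <:+: x) :
    p <:+ x ∨ p <:+: x.dropLast := by
  obtain ⟨s, t, rfl⟩ := h
  rcases eq_or_ne t [] with rfl | ht
  · exact Or.inl ⟨s, by simp⟩
  · exact Or.inr ⟨s, t.dropLast, by rw [List.dropLast_append_of_ne_nil ht]⟩

lemma infix_dropLast_of_append_infix {u t x : List α} (h : u ++ t <:+: x) (ht : t ≠ []) :
    u <:+: x.dropLast := by
  obtain ⟨s, r, rfl⟩ := h
  exact ⟨s, (t ++ r).dropLast, by simp [List.dropLast_append_of_ne_nil, ht]⟩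

lemma Palindromic.eq_of_isSuffix {p q x : List α} (hp : Palindromic p) (hq : Palindromic q)
    (hpx : p <:+ x) (hqx : q <:+ x) (hnew : ¬ p <:+: x.dropLast) (hle : p.length ≤ q.length) :
    p = q := by
  have hpq : p <:+ q := List.suffix_of_suffix_length_le hpx hqx hle
  refine hpq.eq_of_length (hle.antisymm (not_lt.mp fun hlt => hnew ?_))
  obtain ⟨r, rfl⟩ : p <+: q := by
    have := List.reverse_prefix.mpr hpq
    rwa [hp, hq] at this
  exact infix_dropLast_of_append_infix hqx.isInfix (by rintro rfl; simp at hlt)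

lemma isSuffix_of_mem_palFactors_sdiff {p x : List α}
    (hp : p ∈ palFactors x \ palFactors x.dropLast) : p <:+ x :=
  (isSuffix_or_infix_dropLast_of_infix hp.1.1).resolve_right fun h => hp.2 ⟨h, hp.1.2⟩

lemma palFactors_sdiff_dropLast_subsingleton (x : List α) :
    (palFactors x \ palFactors x.dropLast).Subsingleton := by
  have key : ∀ p ∈ palFactors x \ palFactors x.dropLast,
      ∀ q ∈ palFactors x \ palFactors x.dropLast, p.length ≤ q.length → p = q :=
    fun p hp q hq =>
      Palindromic.eq_of_isSuffix hp.1.2 hq.1.2 (isSuffix_of_mem_palFactors_sdiff hp)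
        (isSuffix_of_mem_palFactors_sdiff hq) fun h => hp.2 ⟨h, hp.1.2⟩
  intro p hp q hq
  rcases le_total p.length q.length with h | h
  · exact key p hp q hq h
  · exact (key q hq p hp h).symm

lemma ncard_palFactors_le_dropLast (x : List α) :
    (palFactors x).ncard ≤ (palFactors x.dropLast).ncard + 1 := by
  rw [← Set.ncard_sdiff_add_ncard_of_subset
    (palFactors_mono (List.dropLast_prefix x).isInfix) (palFactors_finite x), add_comm]
  gcongr
  exact (Set.ncard_le_one (palFactors_finite x).sdiff).mpr
    fun _ hp _ hq => palFactors_sdiff_dropLast_subsingleton x hp hq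

lemma ncard_palFactors_le (x : List α) : (palFactors x).ncard ≤ x.length + 1 := by
  induction x using List.reverseRecOn with
  | nil => simp [palFactors_nil]
  | append_singleton y a ih =>
    simpa using (ncard_palFactors_le_dropLast (y ++ [a])).trans (by simpa using ih)

lemma rich_of_length_add_one_le {x : List α} (h : x.length + 1 ≤ (palFactors x).ncard) :
    Rich x :=
  (ncard_palFactors_le x).antisymm h

lemma Rich.not_infix_dropLast {w u : List α} (hrich : Rich w) (hw : w ≠ []) (hu : u <:+ w)
    (hpal : Palindromic u)
    (hlongest : ∀ u' : List α, u' <:+ w → Palindromic u' → u'.length ≤ u.length) :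
    ¬ u <:+: w.dropLast := by
  intro hocc
  have hsub : palFactors w ⊆ palFactors w.dropLast := by
    intro p hp
    by_contra hp'
    have hps := isSuffix_of_mem_palFactors_sdiff ⟨hp, hp'⟩
    have hpu : p = u := Palindromic.eq_of_isSuffix hp.2 hpal hps hu (fun h => hp' ⟨h, hp.2⟩)
      (hlongest p hps hp.2)
    exact hp' (hpu ▸ ⟨hocc, hpal⟩)
  have hle := (Set.ncard_le_ncard hsub (palFactors_finite _)).trans
    (ncard_palFactors_le w.dropLast)
  rw [rich_iff.mp hrich, List.length_dropLast] at hle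
  have := List.length_pos_iff_ne_nil.mpr hw
  omega

/-- The palindromes `s ++ u ++ s.reverse`, for `s` ranging over the nonempty suffixes of `v`. -/
def palExtensions (v u : List α) : Set (List α) :=
  (fun i => v.drop i ++ u ++ (v.drop i).reverse) '' (Finset.range v.length : Set ℕ)

lemma ncard_palExtensions (v u : List α) : (palExtensions v u).ncard = v.length := by
  rw [palExtensions, Set.InjOn.ncard_image, Set.ncard_coe_finset, Finset.card_range]
  intro i hi j hj hij
  simp only [Finset.coe_range, Set.mem_Iio] at hi hj
  have := congrArg List.length hij
  simp only [List.length_append, List.length_reverse, List.length_drop] at this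
  omega

lemma palExtensions_subset {v u : List α} (hu : Palindromic u) :
    palExtensions v u ⊆ palFactors (v ++ u ++ v.reverse) := by
  rintro _ ⟨i, -, rfl⟩
  constructor
  · refine ⟨v.take i, (v.take i).reverse, ?_⟩
    simp only [List.append_assoc]
    rw [← List.append_assoc (v.take i), List.take_append_drop, ← List.reverse_append,
      List.take_append_drop]
  · simp only [Palindromic, List.reverse_append, List.reverse_reverse, List.append_assoc]
    rw [hu]

lemma disjoint_palFactors_palExtensions {v u : List α} (h : ¬ u <:+: (v ++ u).dropLast) :
    Disjoint (palFactors (v ++ u)) (palExtensions v u) := by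
  rw [Set.disjoint_right]
  rintro _ ⟨i, hi, rfl⟩ hmem
  simp only [Finset.coe_range, Set.mem_Iio] at hi
  refine h (infix_dropLast_of_append_infix (t := (v.drop i).reverse) ?_ (by simp; omega))
  exact (List.infix_append (v.drop i) _ []).trans (by simpa using hmem.1)

end PalindromicClosure

open PalindromicClosure in
theorem palindromic_closure_rich {α : Type*} (w v u : List α)
    (hrich : Rich w) (hw : w = v ++ u) (hpal : Palindromic u)
    (hlongest : ∀ u' : List α, u' <:+ w → Palindromic u' → u'.length ≤ u.length) :
    Rich (v ++ u ++ v.reverse) := by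
  subst hw
  rcases eq_or_ne v [] with rfl | hv
  · simpa using hrich
  have hunique := hrich.not_infix_dropLast (by simp [hv]) (List.suffix_append v u) hpal hlongest
  refine rich_of_length_add_one_le ?_
  calc (v ++ u ++ v.reverse).length + 1
      = (palFactors (v ++ u)).ncard + (palExtensions v u).ncard := by
        rw [rich_iff.mp hrich, ncard_palExtensions]; simp; omega
    _ = (palFactors (v ++ u) ∪ palExtensions v u).ncard :=
        (Set.ncard_union_eq (disjoint_palFactors_palExtensions hunique)
          (palFactors_finite _) ((Set.toFinite _).image _)).symm
    _ ≤ (palFactors (v ++ u ++ v.reverse)).ncard :=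
        Set.ncard_le_ncard
          (Set.union_subset (palFactors_mono (List.prefix_append _ _).isInfix)
            (palExtensions_subset hpal))
          (palFactors_finite _)
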